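/- arXiv:2508.20785 — 2 statements merged into one kernel-verified Lean document; each statement's English description precedes it below -/
import Mathlib

section
/- Let p ∈ (0,1), b = 1/(1-p), γ ∈ (0,1), ε ∈ (0,1), and α = (1+ε)·(log_b n)/(γ(1-γ)). Then the expected number of γ-balanced independent sets of size α in the random bipartite graph G_bip(n,p), which equals 2·C(n, γα)·C(n, (1-γ)α)·(1-p)^{γ(1-γ)α²}, is at most 2·exp(-ε·α·log n). -/
open Real

/-- Let `p ∈ (0,1)`, `b = 1/(1-p)`, `γ, ε ∈ (0,1)`, and
`α = (1+ε)·(log_b n)/(γ(1-γ))`.  Then the expected number of `γ`-balanced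
independent sets of size `α` in `G_bip(n,p)`, which equals
`2·C(n, γα)·C(n, (1-γ)α)·(1-p)^{γ(1-γ)α²}`, is at most `2·exp(-ε·α·log n)`.
Here `A = γα` and `B = (1-γ)α` are treated as integers. -/
theorem stmt_1 (n : ℕ) (hn : 2 ≤ n) (p γ ε : ℝ)
    (hp : p ∈ Set.Ioo (0:ℝ) 1) (hγ : γ ∈ Set.Ioo (0:ℝ) 1) (hε : ε ∈ Set.Ioo (0:ℝ) 1)
    (α : ℝ) (hα : α = (1 + ε) * (Real.log n / Real.log (1 / (1 - p))) / (γ * (1 - γ)))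
    (A B : ℕ) (hA : (A : ℝ) = γ * α) (hB : (B : ℝ) = (1 - γ) * α) :
    2 * (n.choose A : ℝ) * (n.choose B : ℝ) * (1 - p) ^ (γ * (1 - γ) * α ^ 2)
      ≤ 2 * Real.exp (-(ε * α * Real.log n)) := by
  obtain ⟨hp0, hp1⟩ := hp
  obtain ⟨hγ0, hγ1⟩ := hγ
  obtain ⟨hε0, hε1⟩ := hε
  have h1p : (0:ℝ) < 1 - p := by linarith
  have hn1 : (1:ℝ) < n := by exact_mod_cast Nat.lt_of_lt_of_le one_lt_two hn
  have hL : 0 < Real.log n := Real.log_pos hn1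
  have hlb : 0 < Real.log (1/(1-p)) :=
    Real.log_pos ((one_lt_div h1p).mpr (by linarith))
  have hlbne : Real.log (1/(1-p)) ≠ 0 := ne_of_gt hlb
  have hγγ : 0 < γ * (1 - γ) := mul_pos hγ0 (by linarith)
  have hkey : γ * (1 - γ) * α = (1 + ε) * (Real.log n / Real.log (1/(1-p))) := by
    rw [hα]; field_simp
  have hlog1p : Real.log (1 - p) = -Real.log (1/(1-p)) := by
    rw [one_div, Real.log_inv, neg_neg]
  have hZ : (1 - p) ^ (γ * (1 - γ) * α ^ 2)
      = Real.exp (-((1 + ε) * α * Real.log n)) := by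
    rw [Real.rpow_def_of_pos h1p]
    congr 1
    have h2 : γ * (1 - γ) * α ^ 2 = (γ * (1 - γ) * α) * α := by ring
    rw [h2, hkey, hlog1p]
    field_simp
  have hZpos : 0 < (1 - p) ^ (γ * (1 - γ) * α ^ 2) := by
    rw [hZ]; exact Real.exp_pos _
  have hnpos : (0:ℝ) < n := by linarith
  have hAB : (A : ℝ) + B = α := by rw [hA, hB]; ring
  calc 2 * (n.choose A : ℝ) * (n.choose B : ℝ) * (1 - p) ^ (γ * (1 - γ) * α ^ 2)
      ≤ 2 * (n:ℝ)^A * (n:ℝ)^B * (1 - p) ^ (γ * (1 - γ) * α ^ 2) := by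
        gcongr
        · exact_mod_cast Nat.choose_le_pow n A
        · exact_mod_cast Nat.choose_le_pow n B
    _ = 2 * Real.exp (((A:ℝ) + B) * Real.log n)
          * Real.exp (-((1 + ε) * α * Real.log n)) := by
        rw [hZ]
        congr 1
        have hA' : (n:ℝ)^A = Real.exp ((A:ℝ) * Real.log n) := by
          rw [← Real.exp_log hnpos, ← Real.exp_nat_mul, Real.exp_log hnpos]
        have hB' : (n:ℝ)^B = Real.exp ((B:ℝ) * Real.log n) := by
          rw [← Real.exp_log hnpos, ← Real.exp_nat_mul, Real.exp_log hnpos]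
        rw [hA', hB', mul_assoc, ← Real.exp_add]
        ring_nf
    _ = 2 * Real.exp (-(ε * α * Real.log n)) := by
        rw [hAB, mul_assoc, ← Real.exp_add]
        congr 1
        ring
end

section
/- Let τ be a stopping time taking values in {1,...,N}, and for each T let E_{1,T},...,E_{m,T} be events and F_T a sigma-algebra such that {τ = T} is F_T-measurable and the events E_{1,T},...,E_{m,T} are conditionally independent given F_T with equal conditional probabilities P(E_{i,T} | F_T) = P(E_{1,T} | F_T). Then P(⋂_{i=1}^m E_{i,τ}) ≥ P(E_{1,τ})^m, where E_{i,τ} = ⋃_T ({τ=T} ∩ E_{i,T}). -/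
open MeasureTheory

/-- Let `τ` be a stopping time with values in `{1,…,N}`, and for each `T` let
`E_{i,T}` be events and `F_T` a sub-σ-algebra such that `{τ = T}` is
`F_T`-measurable, and the events `E_{0,T}, …, E_{m-1,T}` are conditionally
independent given `F_T` with equal conditional probabilities.  Then
`P(⋂ᵢ E_{i,τ}) ≥ P(E_{0,τ})^m`, where `E_{i,τ} = ⋃_T ({τ = T} ∩ E_{i,T})`. -/
theorem stmt_10 {Ω : Type*} [m0 : MeasurableSpace Ω] (μ : Measure Ω)
    [IsProbabilityMeasure μ]
    (N m : ℕ) (hm : 1 ≤ m) (hN : 1 ≤ N)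
    (τ : Ω → ℕ) (hτ : ∀ ω, τ ω ∈ Finset.Icc 1 N)
    (F : ℕ → MeasurableSpace Ω) (hF : ∀ T, F T ≤ m0)
    (E : ℕ → ℕ → Set Ω) (hEmeas : ∀ i T, MeasurableSet (E i T))
    (hτmeas : ∀ T, MeasurableSet[F T] {ω | τ ω = T})
    (hEqCond : ∀ i T, i < m →
      μ[Set.indicator (E i T) (fun _ => (1 : ℝ)) | F T]
        =ᵐ[μ] μ[Set.indicator (E 0 T) (fun _ => (1 : ℝ)) | F T])
    (hCondIndep : ∀ T,
      μ[fun ω => Set.indicator (⋂ i ∈ Finset.range m, E i T) (fun _ => (1 : ℝ)) ω | F T]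
        =ᵐ[μ] fun ω => ((μ[Set.indicator (E 0 T) (fun _ => (1 : ℝ)) | F T]) ω) ^ m) :
    (μ (⋃ T ∈ Finset.Icc 1 N, {ω | τ ω = T} ∩ E 0 T)) ^ m
      ≤ μ (⋂ i ∈ Finset.range m, ⋃ T ∈ Finset.Icc 1 N, {ω | τ ω = T} ∩ E i T) := by
  classical
  set f : ℕ → Ω → ℝ := fun T => μ[Set.indicator (E 0 T) (fun _ => (1 : ℝ)) | F T] with hfdef
  set S : ℕ → Set Ω := fun T => {ω | τ ω = T} with hSdef
  have hSmeas : ∀ T, MeasurableSet (S T) := fun T => (hF T) _ (hτmeas T)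
  have hSdisj : (↑(Finset.Icc 1 N) : Set ℕ).PairwiseDisjoint S := by
    intro a _ b _ hab
    refine Set.disjoint_left.2 fun ω ha hb => hab ?_
    exact ha.symm.trans hb
  -- the intersection of the events
  set C : ℕ → Set Ω := fun T => ⋂ i ∈ Finset.range m, E i T with hCdef
  have hCmeas : ∀ T, MeasurableSet (C T) :=
    fun T => MeasurableSet.biInter (Set.to_countable _) (fun i _ => hEmeas i T)
  have hindInt : ∀ (s : Set Ω), MeasurableSet s →
      Integrable (Set.indicator s (fun _ => (1 : ℝ))) μ :=
    fun s hs => (integrable_const (1 : ℝ)).indicator hs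
  -- g is f (τ ω) ω written as a finite sum of indicators
  set g : Ω → ℝ := fun ω => ∑ T ∈ Finset.Icc 1 N, Set.indicator (S T) (f T) ω with hgdef
  have hfint : ∀ T, Integrable (f T) μ := fun T => integrable_condExp
  have hfm_int : ∀ T, Integrable (fun ω => (f T ω) ^ m) μ := by
    intro T
    exact integrable_condExp.congr (hCondIndep T)
  have hgint : Integrable g μ := by
    apply integrable_finset_sum
    intro T _
    exact (hfint T).indicator (hSmeas T)
  -- g^m as a sum of indicators
  have hgpow : ∀ ω, (g ω) ^ m
      = ∑ T ∈ Finset.Icc 1 N, Set.indicator (S T) (fun ω' => (f T ω') ^ m) ω := by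
    intro ω
    have hτω : τ ω ∈ Finset.Icc 1 N := hτ ω
    have h1 : g ω = f (τ ω) ω := by
      show (∑ T ∈ Finset.Icc 1 N, Set.indicator (S T) (f T) ω) = f (τ ω) ω
      rw [Finset.sum_eq_single_of_mem (τ ω) hτω]
      · simp [Set.indicator_of_mem, S]
      · intro T hT hne
        exact Set.indicator_of_notMem (fun h => hne (h.symm)) _
    have h2 : ∑ T ∈ Finset.Icc 1 N, Set.indicator (S T) (fun ω' => (f T ω') ^ m) ω
        = (f (τ ω) ω) ^ m := by
      rw [Finset.sum_eq_single_of_mem (τ ω) hτω]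
      · simp [Set.indicator_of_mem, S]
      · intro T hT hne
        exact Set.indicator_of_notMem (fun h => hne (h.symm)) _
    rw [h1, h2]
  have hgm_int : Integrable (fun ω => (g ω) ^ m) μ := by
    have : (fun ω => (g ω) ^ m)
        = fun ω => ∑ T ∈ Finset.Icc 1 N, Set.indicator (S T) (fun ω' => (f T ω') ^ m) ω :=
      funext hgpow
    rw [this]
    apply integrable_finset_sum
    intro T _
    exact (hfm_int T).indicator (hSmeas T)
  -- integral of g equals the measure of the union
  have hμint : ∀ (s : Set Ω), MeasurableSet s →
      (μ s).toReal = ∫ ω, Set.indicator s (fun _ => (1 : ℝ)) ω ∂μ := by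
    intro s hs
    exact (integral_indicator_one hs).symm
  have key : ∀ (T : ℕ) (D : Set Ω), MeasurableSet D →
      (∫ ω in S T, (μ[Set.indicator D (fun _ => (1 : ℝ)) | F T]) ω ∂μ)
        = (μ (S T ∩ D)).toReal := by
    intro T D hD
    rw [setIntegral_condExp (hF T) (hindInt D hD) (hτmeas T)]
    rw [← integral_indicator (hSmeas T), Set.indicator_indicator]
    rw [← hμint _ ((hSmeas T).inter hD)]
  have hg_integral : ∫ ω, g ω ∂μ
      = (μ (⋃ T ∈ Finset.Icc 1 N, S T ∩ E 0 T)).toReal := by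
    rw [hgdef]
    rw [integral_finset_sum _ (fun T _ => (hfint T).indicator (hSmeas T))]
    have : ∀ T ∈ Finset.Icc 1 N,
        ∫ ω, Set.indicator (S T) (f T) ω ∂μ = (μ (S T ∩ E 0 T)).toReal := by
      intro T _
      rw [integral_indicator (hSmeas T)]
      exact key T (E 0 T) (hEmeas 0 T)
    rw [Finset.sum_congr rfl this]
    rw [measure_biUnion_finset (hSdisj.mono_on (fun T _ => Set.inter_subset_left))
      (fun T _ => (hSmeas T).inter (hEmeas 0 T))]
    rw [ENNReal.toReal_sum (fun T _ => measure_ne_top μ _)]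
  -- integral of g^m equals the measure of the union with intersections
  have hgm_integral : ∫ ω, (g ω) ^ m ∂μ
      = (μ (⋃ T ∈ Finset.Icc 1 N, S T ∩ C T)).toReal := by
    rw [funext hgpow]
    rw [integral_finset_sum _ (fun T _ => (hfm_int T).indicator (hSmeas T))]
    have : ∀ T ∈ Finset.Icc 1 N,
        ∫ ω, Set.indicator (S T) (fun ω' => (f T ω') ^ m) ω ∂μ
          = (μ (S T ∩ C T)).toReal := by
      intro T _
      rw [integral_indicator (hSmeas T)]
      rw [setIntegral_congr_ae (hSmeas T)
        (((hCondIndep T).symm).mono (fun ω hω _ => hω))]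
      exact key T (C T) (hCmeas T)
    rw [Finset.sum_congr rfl this]
    rw [measure_biUnion_finset (hSdisj.mono_on (fun T _ => Set.inter_subset_left))
      (fun T _ => (hSmeas T).inter (hCmeas T))]
    rw [ENNReal.toReal_sum (fun T _ => measure_ne_top μ _)]
  -- the RHS set is the disjoint union
  have hset : (⋂ i ∈ Finset.range m, ⋃ T ∈ Finset.Icc 1 N, S T ∩ E i T)
      = ⋃ T ∈ Finset.Icc 1 N, S T ∩ C T := by
    ext ω
    simp only [Set.mem_iInter, Set.mem_iUnion, Set.mem_inter_iff, Finset.mem_range,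
      Finset.mem_Icc, Set.mem_setOf_eq, hCdef, hSdef]
    constructor
    · intro h
      refine ⟨τ ω, by simpa [Finset.mem_Icc] using hτ ω, rfl, ?_⟩
      intro i hi
      obtain ⟨T, _, hτT, hE⟩ := h i hi
      rwa [hτT]
    · rintro ⟨T, hT, hτT, hC⟩
      intro i hi
      exact ⟨T, hT, hτT, hC i hi⟩
  -- nonnegativity of g
  have hg_nonneg : ∀ᵐ ω ∂μ, (0 : ℝ) ≤ g ω := by
    have h : ∀ᵐ ω ∂μ, ∀ T : ℕ, 0 ≤ f T ω :=
      ae_all_iff.2 fun T =>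
        condExp_nonneg (Filter.Eventually.of_forall (Set.indicator_nonneg (fun _ _ => zero_le_one)))
    filter_upwards [h] with ω hω
    exact Finset.sum_nonneg fun T hT => Set.indicator_nonneg (fun x _ => hω T) ω
  -- Jensen's inequality
  have hjensen : (∫ ω, g ω ∂μ) ^ m ≤ ∫ ω, (g ω) ^ m ∂μ := by
    have := (convexOn_pow (𝕜 := ℝ) m).map_integral_le (μ := μ) (f := g)
      ((continuous_pow m).continuousOn) isClosed_Ici hg_nonneg hgint hgm_int
    exact this
  -- conclude
  rw [hset]
  have hfinal : ((μ (⋃ T ∈ Finset.Icc 1 N, S T ∩ E 0 T)).toReal) ^ m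
      ≤ (μ (⋃ T ∈ Finset.Icc 1 N, S T ∩ C T)).toReal := by
    rw [← hg_integral, ← hgm_integral]; exact hjensen
  have h1 : (μ (⋃ T ∈ Finset.Icc 1 N, S T ∩ E 0 T)) ^ m ≠ ⊤ :=
    ENNReal.pow_ne_top (measure_ne_top μ _)
  rw [← ENNReal.toReal_le_toReal h1 (measure_ne_top μ _)]
  rw [ENNReal.toReal_pow]
  exact hfinal
end
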